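/- Let k be a field, let R and R^∨ be k-vector spaces with a nondegenerate bilinear pairing ⟨·,·⟩ : R^∨ × R → k, and let V, W be k-vector spaces. Then the map D' : Hom(V, R ⊗ W) → Hom_rat(V ⊗ R^∨, W), sending a linear map f : V → R ⊗ W to D'(f) = (id_W ⊗ ⟨·,·⟩) ∘ τ ∘ (f ⊗ id_{R^∨}), where τ : R ⊗ W ⊗ R^∨ → W ⊗ R^∨ ⊗ R is the twist x ⊗ w ⊗ ξ ↦ w ⊗ ξ ⊗ x, is well defined and bijective. -/

import Mathlib

/-!
Every tensor in `R ⊗ W` lies in `E ⊗ W` for some finite-dimensional `E ⊆ R`, and on `E ⊗ W` the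
evaluation `x ⊗ w ↦ (ξ ↦ ⟨ξ, x⟩ • w)` factors as the isomorphism `E ⊗ W ≃ Hom(E^*, W)` followed by
precomposition with the restriction `R^∨ → E^*`, `ξ ↦ ⟨ξ, ·⟩|_E`, whose kernel is `⊥E`.
Nondegeneracy makes this restriction surjective. Hence the evaluation `R ⊗ W → Hom(R^∨, W)` is
injective and its image consists of the maps vanishing on `⊥E` for some finite-dimensional `E`.
Currying identifies `D'` with postcomposition by this evaluation.
-/

open TensorProduct

section

variable (k : Type*) [Field k] (R Rv V W : Type*)
  [AddCommGroup R] [Module k R] [AddCommGroup Rv] [Module k Rv]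
  [AddCommGroup V] [Module k V] [AddCommGroup W] [Module k W]

/-- The evaluation map `(R ⊗ W) →ₗ (R^∨ →ₗ W)`, `x ⊗ w ↦ (ξ ↦ ⟨ξ, x⟩ • w)`,
associated to a bilinear pairing `⟨·,·⟩ = B : R^∨ → R → k`. -/
noncomputable def pairingEval (B : Rv →ₗ[k] R →ₗ[k] k) :
    R ⊗[k] W →ₗ[k] (Rv →ₗ[k] W) :=
  TensorProduct.lift
    ((LinearMap.lflip : (Rv →ₗ[k] W →ₗ[k] W) ≃ₗ[k] (W →ₗ[k] Rv →ₗ[k] W)).toLinearMap ∘ₗ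
      (LinearMap.llcomp k Rv k (W →ₗ[k] W) (LinearMap.lsmul k W)) ∘ₗ B.flip)

/-- The map `D' : Hom(V, R ⊗ W) → Hom(V ⊗ R^∨, W)`,
`f ↦ (id_W ⊗ ⟨·,·⟩) ∘ τ ∘ (f ⊗ id_{R^∨})`, where `τ : R ⊗ W ⊗ R^∨ → W ⊗ R^∨ ⊗ R`
is the twist `x ⊗ w ⊗ ξ ↦ w ⊗ ξ ⊗ x`; on pure tensors,
`D' f (v ⊗ ξ) = (id_W ⊗ ⟨·,·⟩)(τ(f v ⊗ ξ))`. -/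
noncomputable def Dmap' (B : Rv →ₗ[k] R →ₗ[k] k) (f : V →ₗ[k] R ⊗[k] W) :
    V ⊗[k] Rv →ₗ[k] W :=
  TensorProduct.lift ((pairingEval k R Rv W B) ∘ₗ f)

/-- `g : V ⊗ R^∨ → W` is rational if every `v ∈ V` admits a finite-dimensional
subspace `E ⊆ R` with `g(v ⊗ ξ) = 0` for all `ξ ∈ ⊥E`. -/
def IsRatRight (B : Rv →ₗ[k] R →ₗ[k] k) (g : V ⊗[k] Rv →ₗ[k] W) : Prop :=
  ∀ v : V, ∃ E : Submodule k R, FiniteDimensional k E ∧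
    ∀ ξ : Rv, (∀ x ∈ E, B ξ x = 0) → g (v ⊗ₜ[k] ξ) = 0

section

variable {k R Rv W}

lemma LinearMap.exists_comp_eq_of_surjective_of_ker_le {S M N P : Type*} [CommRing S]
    [AddCommGroup M] [Module S M] [AddCommGroup N] [Module S N] [AddCommGroup P] [Module S P]
    {π : M →ₗ[S] N} (hπ : Function.Surjective π) {h : M →ₗ[S] P}
    (hker : LinearMap.ker π ≤ LinearMap.ker h) : ∃ h' : N →ₗ[S] P, h' ∘ₗ π = h :=
  ⟨(LinearMap.ker π).liftQ h hker ∘ₗ (π.quotKerEquivOfSurjective hπ).symm.toLinearMap, by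
    ext ξ
    simp [LinearMap.quotKerEquivOfSurjective_symm_apply]⟩

lemma LinearMap.exists_comp_eq_of_range_le {S M N P : Type*} [CommRing S]
    [AddCommGroup M] [Module S M] [AddCommGroup N] [Module S N] [AddCommGroup P] [Module S P]
    {f : N →ₗ[S] P} (hf : Function.Injective f) {g : M →ₗ[S] P}
    (hg : LinearMap.range g ≤ LinearMap.range f) : ∃ g' : M →ₗ[S] N, f ∘ₗ g' = g :=
  ⟨(LinearEquiv.ofInjective f hf).symm.toLinearMap ∘ₗ g.codRestrict _ fun v => hg ⟨v, rfl⟩, by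
    ext v
    simp⟩

@[simp]
lemma pairingEval_tmul (B : Rv →ₗ[k] R →ₗ[k] k) (x : R) (w : W) (ξ : Rv) :
    pairingEval k R Rv W B (x ⊗ₜ w) ξ = B ξ x • w := by
  simp [pairingEval]

lemma exists_finiteDimensional_rTensor_subtype_eq (t : R ⊗[k] W) :
    ∃ E : Submodule k R, FiniteDimensional k E ∧ ∃ s, E.subtype.rTensor W s = t := by
  obtain ⟨E, hE, ht⟩ := exists_finite_submodule_left_of_setFinite {t} (Set.finite_singleton t)
  exact ⟨E, hE, ht rfl⟩

lemma pairingEval_rTensor_subtype (B : Rv →ₗ[k] R →ₗ[k] k) (E : Submodule k R) (s : E ⊗[k] W) :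
    pairingEval k R Rv W B (E.subtype.rTensor W s) =
      pairingEval k E (Module.Dual k E) W LinearMap.id s ∘ₗ B.compl₂ E.subtype := by
  induction s using TensorProduct.induction_on with
  | zero => simp
  | tmul x w => ext; simp
  | add s t hs ht => simp only [map_add, hs, ht, LinearMap.add_comp]

lemma pairingEval_id_bijective {M : Type*} [AddCommGroup M] [Module k M] [FiniteDimensional k M] :
    Function.Bijective (pairingEval k M (Module.Dual k M) W LinearMap.id) := by
  have : pairingEval k M (Module.Dual k M) W LinearMap.id =
      (dualTensorHomEquiv k (Module.Dual k M) W).toLinearMap ∘ₗ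
        ((Module.evalEquiv k M).rTensor W).toLinearMap := by
    ext x w φ
    simp
  rw [this]
  exact ((Module.evalEquiv k M).rTensor W ≪≫ₗ dualTensorHomEquiv k (Module.Dual k M) W).bijective

lemma compl₂_subtype_surjective (B : Rv →ₗ[k] R →ₗ[k] k)
    (hB : ∀ x : R, (∀ ξ : Rv, B ξ x = 0) → x = 0)
    (E : Submodule k R) [FiniteDimensional k E] :
    Function.Surjective (B.compl₂ E.subtype) := by
  rw [← LinearMap.dualMap_injective_iff, injective_iff_map_eq_zero]
  intro Φ hΦ
  obtain ⟨x, rfl⟩ := (Module.evalEquiv k E).surjective Φ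
  have hx : x = 0 := by
    rw [← Submodule.coe_eq_zero]
    exact hB x fun ξ => by simpa using LinearMap.congr_fun hΦ ξ
  simp [hx]

lemma pairingEval_injective (B : Rv →ₗ[k] R →ₗ[k] k)
    (hB : ∀ x : R, (∀ ξ : Rv, B ξ x = 0) → x = 0) :
    Function.Injective (pairingEval k R Rv W B) := by
  rw [injective_iff_map_eq_zero]
  intro t ht
  obtain ⟨E, hE, s, rfl⟩ := exists_finiteDimensional_rTensor_subtype_eq t
  rw [pairingEval_rTensor_subtype, ← LinearMap.zero_comp (B.compl₂ E.subtype),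
    LinearMap.cancel_right (compl₂_subtype_surjective B hB E),
    ← map_zero (pairingEval k E (Module.Dual k E) W LinearMap.id)] at ht
  rw [pairingEval_id_bijective.injective ht, map_zero]

lemma exists_finiteDimensional_of_mem_range_pairingEval (B : Rv →ₗ[k] R →ₗ[k] k)
    {h : Rv →ₗ[k] W} (hh : h ∈ LinearMap.range (pairingEval k R Rv W B)) :
    ∃ E : Submodule k R, FiniteDimensional k E ∧ ∀ ξ : Rv, (∀ x ∈ E, B ξ x = 0) → h ξ = 0 := by
  obtain ⟨t, rfl⟩ := hh
  obtain ⟨E, hE, s, rfl⟩ := exists_finiteDimensional_rTensor_subtype_eq t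
  refine ⟨E, hE, fun ξ hξ => ?_⟩
  have hξ0 : B.compl₂ E.subtype ξ = 0 := LinearMap.ext fun x => hξ x x.2
  rw [pairingEval_rTensor_subtype, LinearMap.comp_apply, hξ0, map_zero]

lemma mem_range_pairingEval_of_finiteDimensional (B : Rv →ₗ[k] R →ₗ[k] k)
    (hB : ∀ x : R, (∀ ξ : Rv, B ξ x = 0) → x = 0)
    (E : Submodule k R) [FiniteDimensional k E] {h : Rv →ₗ[k] W}
    (hh : ∀ ξ : Rv, (∀ x ∈ E, B ξ x = 0) → h ξ = 0) :
    h ∈ LinearMap.range (pairingEval k R Rv W B) := by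
  obtain ⟨h', rfl⟩ := LinearMap.exists_comp_eq_of_surjective_of_ker_le
    (compl₂_subtype_surjective B hB E) fun ξ hξ =>
      hh ξ fun x hx => LinearMap.congr_fun (LinearMap.mem_ker.mp hξ) ⟨x, hx⟩
  obtain ⟨s, rfl⟩ := pairingEval_id_bijective.surjective h'
  exact ⟨E.subtype.rTensor W s, pairingEval_rTensor_subtype B E s⟩

end

theorem dual_pair_rational_hom_right
    (B : Rv →ₗ[k] R →ₗ[k] k)
    (hnd₂ : ∀ x : R, (∀ ξ : Rv, B ξ x = 0) → x = 0) :
    (∀ f : V →ₗ[k] R ⊗[k] W, IsRatRight k R Rv V W B (Dmap' k R Rv V W B f)) ∧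
    Function.Injective (Dmap' k R Rv V W B) ∧
    (∀ g : V ⊗[k] Rv →ₗ[k] W, IsRatRight k R Rv V W B g →
      ∃ f : V →ₗ[k] R ⊗[k] W, Dmap' k R Rv V W B f = g) := by
  have hD (f : V →ₗ[k] R ⊗[k] W) (v : V) (ξ : Rv) :
      Dmap' k R Rv V W B f (v ⊗ₜ ξ) = pairingEval k R Rv W B (f v) ξ :=
    lift.tmul _ _
  have hinj := pairingEval_injective (W := W) B hnd₂
  refine ⟨fun f v => ?_, fun f₁ f₂ h => ?_, fun g hg => ?_⟩
  · obtain ⟨E, hE, hvan⟩ :=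
      exists_finiteDimensional_of_mem_range_pairingEval B (LinearMap.mem_range_self _ (f v))
    exact ⟨E, hE, fun ξ hξ => (hD f v ξ).trans (hvan ξ hξ)⟩
  · ext v : 1
    refine hinj (LinearMap.ext fun ξ => ?_)
    rw [← hD, ← hD, h]
  · have hrange : LinearMap.range (curry g) ≤ LinearMap.range (pairingEval k R Rv W B) := by
      rintro _ ⟨v, rfl⟩
      obtain ⟨E, hE, hvan⟩ := hg v
      exact mem_range_pairingEval_of_finiteDimensional B hnd₂ E hvan
    obtain ⟨f, hf⟩ := LinearMap.exists_comp_eq_of_range_le hinj hrange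
    exact ⟨f, TensorProduct.ext' fun v ξ => by rw [hD, ← LinearMap.comp_apply, hf]; rfl⟩

end
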